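/- Let p be an odd prime and let e, d ∈ 𝔽_p with e ≠ 0, e ≠ 1, d ≠ 0, d ≠ 1 and e + d ≠ 1. Then (e + d − 1)·(γ_p((d − 1)/(e + d − 1)) − γ_p(d/(e + d − 1))) = γ_p(e) − γ_p(d) in 𝔽_p. -/

import Mathlib

/-!
Over `ℤ`, `((x + y) ^ p - x ^ p - y ^ p) / p` has coefficients `C(p, k) / p ≡ (-1) ^ (k - 1) / k`
mod `p`, so mod `p` it is the homogenized Mirimanoff polynomial: its value at `(x, y)` is
`-y * γ_p(-x / y)`.
The relation is the reduction of an identity between four such quotients over `ℤ`, which holds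
because their `p`-multiples cancel once `p` odd turns `(-x) ^ p` into `-x ^ p`.
-/

def mirimanoff (p : ℕ) (t : ZMod p) : ZMod p :=
  ∑ j ∈ Finset.Icc 1 (p - 1), (j : ZMod p)⁻¹ * t ^ j

open Finset

def addPowQuotient {R : Type*} [CommSemiring R] (p : ℕ) (x y : R) : R :=
  ∑ k ∈ Ioo 0 p, x ^ k * y ^ (p - k) * ((p.choose k / p : ℕ) : R)

theorem add_pow_prime_eq_addPowQuotient {R : Type*} [CommSemiring R] {p : ℕ}
    (hp : p.Prime) (x y : R) : (x + y) ^ p = x ^ p + y ^ p + p * addPowQuotient p x y :=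
  add_pow_prime_eq' hp x y

@[simp, norm_cast]
theorem Int.cast_addPowQuotient {R : Type*} [CommRing R] (p : ℕ) (x y : ℤ) :
    ((addPowQuotient p x y : ℤ) : R) = addPowQuotient p (x : R) (y : R) := by
  simp only [addPowQuotient, Int.cast_sum, Int.cast_mul, Int.cast_pow, Int.cast_natCast]

theorem addPowQuotient_shift_relation {p : ℕ} (hp : p.Prime) (hodd : Odd p) (a b : ℤ) :
    addPowQuotient p (1 - b) (a + b - 1) - addPowQuotient p (-b) (a + b - 1) =
      addPowQuotient p (-a) 1 - addPowQuotient p (-b) 1 := by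
  have hp0 : (p : ℤ) ≠ 0 := by exact_mod_cast hp.ne_zero
  have h := add_pow_prime_eq_addPowQuotient (R := ℤ) hp
  apply mul_left_cancel₀ hp0
  have h1 := h (1 - b) (a + b - 1)
  have h2 := h (-b) (a + b - 1)
  have h3 := h (-a) 1
  have h4 := h (-b) 1
  have hb : (1 - b) ^ p = -(b - 1) ^ p := by rw [← hodd.neg_pow]; ring_nf
  have ha : (1 - a) ^ p = -(a - 1) ^ p := by rw [← hodd.neg_pow]; ring_nf
  rw [show 1 - b + (a + b - 1) = a by ring, hb] at h1
  rw [show -b + (a + b - 1) = a - 1 by ring, hodd.neg_pow] at h2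
  rw [show -a + 1 = 1 - a by ring, ha, hodd.neg_pow, one_pow] at h3
  rw [show -b + 1 = 1 - b by ring, hb, hodd.neg_pow, one_pow] at h4
  linear_combination h2 - h1 + h3 - h4

section ZModPrime

variable {p : ℕ} [hp : Fact p.Prime]

theorem ZMod.natCast_choose_sub_one {k : ℕ} (hk : k < p) :
    (((p - 1).choose k : ℕ) : ZMod p) = (-1) ^ k := by
  obtain ⟨n, rfl⟩ : ∃ n, p = n + 1 := ⟨p - 1, by have := hp.out.pos; omega⟩
  rw [Nat.add_sub_cancel]
  induction k with
  | zero => simp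
  | succ k ih =>
    have hpascal : ((n + 1).choose (k + 1) : ZMod (n + 1)) = 0 :=
      (ZMod.natCast_eq_zero_iff _ _).2 (hp.out.dvd_choose_self k.succ_ne_zero hk)
    rw [Nat.choose_succ_succ', Nat.cast_add, ih (by omega)] at hpascal
    rw [pow_succ]
    linear_combination hpascal

theorem ZMod.natCast_choose_div_self {j : ℕ} (hj0 : 0 < j) (hjp : j < p) :
    ((p.choose j / p : ℕ) : ZMod p) = (-1) ^ (j - 1) * (j : ZMod p)⁻¹ := by
  have hj : (j : ZMod p) ≠ 0 := by
    rw [Ne, ZMod.natCast_eq_zero_iff]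
    exact fun h => (Nat.le_of_dvd hj0 h).not_gt hjp
  have hcoeff : p.choose j / p * j = (p - 1).choose (j - 1) := by
    apply Nat.eq_of_mul_eq_mul_left hp.out.pos
    obtain ⟨n, rfl⟩ : ∃ n, p = n + 1 := ⟨p - 1, by have := hp.out.pos; omega⟩
    obtain ⟨i, rfl⟩ : ∃ i, j = i + 1 := ⟨j - 1, by omega⟩
    rw [← mul_assoc, Nat.mul_div_cancel' (hp.out.dvd_choose_self i.succ_ne_zero hjp),
      Nat.add_sub_cancel, Nat.add_sub_cancel, Nat.add_one_mul_choose_eq]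
  rw [eq_mul_inv_iff_mul_eq₀ hj, ← Nat.cast_mul, hcoeff, ZMod.natCast_choose_sub_one (by omega)]

theorem addPowQuotient_neg_mul_self (t v : ZMod p) :
    addPowQuotient p (-(t * v)) v = -(v * mirimanoff p t) := by
  have hIoo : Ioo 0 p = Icc 1 (p - 1) := by ext; simp only [mem_Ioo, mem_Icc]; omega
  rw [addPowQuotient, mirimanoff, hIoo, mul_sum, ← sum_neg_distrib]
  refine sum_congr rfl fun j hj => ?_
  obtain ⟨hj1, hjp⟩ := mem_Icc.1 hj
  obtain ⟨i, rfl⟩ : ∃ i, j = i + 1 := ⟨j - 1, by omega⟩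
  -- the `j`-th term is `(-1) ^ (2j - 1) * t ^ j * v ^ p / j`, and `v ^ p = v`
  have hv : v ^ (i + 1) * v ^ (p - (i + 1)) = v := by
    rw [← pow_add, Nat.add_sub_cancel' (by omega), ZMod.pow_card]
  rw [ZMod.natCast_choose_div_self (by omega) (by omega), Nat.add_sub_cancel, neg_pow, mul_pow]
  have hsign : (-1 : ZMod p) ^ (i + 1) * (-1) ^ i = -1 := by
    rw [← pow_add]
    exact Odd.neg_one_pow ⟨i, by ring⟩
  linear_combination
    ((-1 : ZMod p) ^ (i + 1) * (-1) ^ i) * (t ^ (i + 1) * ((i + 1 : ℕ) : ZMod p)⁻¹) * hv +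
      t ^ (i + 1) * ((i + 1 : ℕ) : ZMod p)⁻¹ * v * hsign

theorem addPowQuotient_eq_neg_mul_mirimanoff (u : ZMod p) {v : ZMod p} (hv : v ≠ 0) :
    addPowQuotient p u v = -(v * mirimanoff p (-u / v)) := by
  rw [← addPowQuotient_neg_mul_self, div_mul_cancel₀ _ hv, neg_neg]

end ZModPrime

theorem mirimanoff_ed_relation_general (p : ℕ) [hp : Fact p.Prime] (hodd : Odd p)
    (e d : ZMod p) (hed : e + d ≠ 1) :
    (e + d - 1) * (mirimanoff p ((d - 1) / (e + d - 1)) - mirimanoff p (d / (e + d - 1))) =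
      mirimanoff p e - mirimanoff p d := by
  obtain ⟨a, rfl⟩ := ZMod.intCast_surjective e
  obtain ⟨b, rfl⟩ := ZMod.intCast_surjective d
  have key := congrArg (Int.cast : ℤ → ZMod p) (addPowQuotient_shift_relation hp.out hodd a b)
  push_cast at key
  have hs : (a : ZMod p) + b - 1 ≠ 0 := sub_ne_zero.2 hed
  simp only [addPowQuotient_eq_neg_mul_mirimanoff _ hs,
    addPowQuotient_eq_neg_mul_mirimanoff _ one_ne_zero, neg_sub, neg_neg, div_one, one_mul] at key
  linear_combination -key

theorem mirimanoff_ed_relation (p : ℕ) [hp : Fact p.Prime] (hodd : Odd p)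
    (e d : ZMod p) (he0 : e ≠ 0) (he1 : e ≠ 1) (hd0 : d ≠ 0) (hd1 : d ≠ 1)
    (hed : e + d ≠ 1) :
    (e + d - 1) * (mirimanoff p ((d - 1) / (e + d - 1)) - mirimanoff p (d / (e + d - 1))) =
      mirimanoff p e - mirimanoff p d :=
  mirimanoff_ed_relation_general p (hp := hp) hodd e d hed
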